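/- Fix integers n ≥ 2 and 1 ≤ k ≤ n−1 and let ζ = e^{2πi/n}. For a root set I of type (k,n) with S_{(b^a)}(I) ≠ 0 for all rectangular partitions with 1 ≤ a ≤ k rows and 1 ≤ b ≤ n−k columns, let x*(I) ∈ (ℂ^×)^{k(n−k)} be the point with coordinates x*(I)_{i,j} = S_{(j^{k+1−i})}(I) / S_{((j−1)^{k−i})}(I) for 1 ≤ i ≤ k, 1 ≤ j ≤ n−k. Then ζ·I and conj(I) are again root sets of type (k,n) satisfying the same nonvanishing hypothesis, and x*(ζ·I) = ρ(x*(I)) and x*(conj(I)) = conj(x*(I)), where (ρ(x))_{i,j} = ζ^{k−i+j}·x_{i,j} and conjugation is applied coordinatewise. In particular, whenever the object of the Fukaya category associated to I is defined, so are those associated to the whole dihedral orbit of I. -/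

import Mathlib

noncomputable section

/-- Cells of the Young diagram of `lam` (at most `m` rows). -/
def youngCells (m : ℕ) (lam : ℕ → ℕ) : Finset (ℕ × ℕ) :=
  (Finset.range m).biUnion fun r => (Finset.range (lam r)).image fun c => (r, c)

/-- A filling of the diagram with entries in `{1,…,m}` is a semistandard Young tableau if
rows are weakly increasing and columns are strictly increasing. -/
def IsSSYT {m : ℕ} {lam : ℕ → ℕ} (T : {p // p ∈ youngCells m lam} → Fin m) : Prop :=
  (∀ p q : {p // p ∈ youngCells m lam},
      (p : ℕ × ℕ).1 = (q : ℕ × ℕ).1 → (q : ℕ × ℕ).2 = (p : ℕ × ℕ).2 + 1 → T p ≤ T q) ∧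
  (∀ p q : {p // p ∈ youngCells m lam},
      (p : ℕ × ℕ).2 = (q : ℕ × ℕ).2 → (q : ℕ × ℕ).1 = (p : ℕ × ℕ).1 + 1 → T p < T q)

open Classical in
/-- The finite set of semistandard Young tableaux of shape `lam` with entries in `{1,…,m}`. -/
def ssytFinset (m : ℕ) (lam : ℕ → ℕ) : Finset ({p // p ∈ youngCells m lam} → Fin m) :=
  Finset.univ.filter IsSSYT

/-- The Schur polynomial of the partition `lam`, evaluated at `x 0, …, x (m-1)`:
the sum over semistandard Young tableaux of the corresponding monomials. -/
def schur (m : ℕ) (lam : ℕ → ℕ) (x : Fin m → ℂ) : ℂ :=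
  ∑ T ∈ ssytFinset m lam, ∏ p, x (T p)

/-- Evaluation of the Schur polynomial (in `I.card` variables) at a finite set of
complex numbers; well defined since Schur polynomials are symmetric. -/
def schurSet (lam : ℕ → ℕ) (I : Finset ℂ) : ℂ :=
  schur I.card lam fun i => (I.equivFin.symm i : ℂ)

/-- A root set of type `(k,n)`: a set of `k` distinct complex numbers
each satisfying `ζ^n = (-1)^(k+1)`. -/
def IsRootSet (k n : ℕ) (I : Finset ℂ) : Prop :=
  I.card = k ∧ ∀ z ∈ I, z ^ n = (-1 : ℂ) ^ (k + 1)

/-- `e^{2πi/n}`. -/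
def zetaRoot (n : ℕ) : ℂ := Complex.exp (2 * Real.pi * Complex.I / n)

/-- The rectangular partition `(partSize^numParts)`: `numParts` parts equal to `partSize`. -/
def rectPart (numParts partSize : ℕ) : ℕ → ℕ := fun r => if r < numParts then partSize else 0

/-- The point `x*(I)` with coordinates `x*_{i,j} = S_{(j^{k+1−i})}(I) / S_{((j−1)^{k−i})}(I)`. -/
def xstar (k : ℕ) (I : Finset ℂ) : ℕ × ℕ → ℂ := fun q =>
  schurSet (rectPart (k + 1 - q.1) q.2) I / schurSet (rectPart (k - q.1) (q.2 - 1)) I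

namespace BK

open Finset

lemma mem_youngCells {m : ℕ} {lam : ℕ → ℕ} {r c : ℕ} :
    (r, c) ∈ youngCells m lam ↔ r < m ∧ c < lam r := by
  simp only [youngCells, mem_biUnion, mem_image, mem_range, Prod.mk.injEq]
  constructor
  · rintro ⟨i, hi, j, hj, rfl, rfl⟩; exact ⟨hi, hj⟩
  · rintro ⟨h1, h2⟩; exact ⟨r, h1, c, h2, rfl, rfl⟩

variable (m : ℕ) (lam : ℕ → ℕ)

/-- total fill: value of `T` at cell `(r,c)`, junk value `m` off the diagram. -/
def val (T : {p // p ∈ youngCells m lam} → Fin m) (r c : ℕ) : ℕ :=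
  if h : (r, c) ∈ youngCells m lam then (T ⟨(r, c), h⟩ : ℕ) else m

variable {m lam}

lemma val_lt_iff {T : {p // p ∈ youngCells m lam} → Fin m} {r c : ℕ} :
    val m lam T r c < m ↔ (r, c) ∈ youngCells m lam := by
  unfold val; split
  next h => simpa using h
  next h => simpa using h

lemma val_cell {T : {p // p ∈ youngCells m lam} → Fin m} {r c : ℕ}
    (h : (r, c) ∈ youngCells m lam) : val m lam T r c = (T ⟨(r, c), h⟩ : ℕ) := dif_pos h

lemma val_noncell {T : {p // p ∈ youngCells m lam} → Fin m} {r c : ℕ}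
    (h : (r, c) ∉ youngCells m lam) : val m lam T r c = m := dif_neg h

section Hyp

variable (hlam : ∀ r, lam (r + 1) ≤ lam r)
variable {T : {p // p ∈ youngCells m lam} → Fin m} (hT : IsSSYT T)

include hT in
lemma row_adj {r c : ℕ} (h : (r, c + 1) ∈ youngCells m lam) :
    val m lam T r c ≤ val m lam T r (c + 1) := by
  have h0 : (r, c) ∈ youngCells m lam := by
    rw [mem_youngCells] at h ⊢; omega
  rw [val_cell h0, val_cell h]
  exact hT.1 ⟨(r, c), h0⟩ ⟨(r, c + 1), h⟩ rfl rfl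

include hT in
lemma row_mono {r c c' : ℕ} (hcc : c ≤ c') (h : (r, c') ∈ youngCells m lam) :
    val m lam T r c ≤ val m lam T r c' := by
  induction c' , hcc using Nat.le_induction with
  | base => exact le_rfl
  | succ c' hcc ih =>
    have h' : (r, c') ∈ youngCells m lam := by rw [mem_youngCells] at h ⊢; omega
    exact (ih h').trans (row_adj hT h)

include hlam hT in
lemma col_adj {r c : ℕ} (h : (r + 1, c) ∈ youngCells m lam) :
    val m lam T r c < val m lam T (r + 1) c := by
  have h0 : (r, c) ∈ youngCells m lam := by
    rw [mem_youngCells] at h ⊢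
    exact ⟨by omega, lt_of_lt_of_le h.2 (hlam r)⟩
  rw [val_cell h0, val_cell h]
  exact hT.2 ⟨(r, c), h0⟩ ⟨(r + 1, c), h⟩ rfl rfl

end Hyp


section Hyp2

variable (m lam)
variable (a : ℕ) (T : {p // p ∈ youngCells m lam} → Fin m)

/-- free `a`: value `a` and the cell below doesn't hold `a+1`. -/
def fA (r c : ℕ) : Prop := val m lam T r c = a ∧ val m lam T (r + 1) c ≠ a + 1

/-- free `a+1`: value `a+1` and the cell above doesn't hold `a`. -/
def fB (r c : ℕ) : Prop := val m lam T r c = a + 1 ∧ val m lam T (r - 1) c ≠ a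

def bkfree (r c : ℕ) : Prop := fA m lam a T r c ∨ fB m lam a T r c

instance : ∀ r c, Decidable (fA m lam a T r c) := fun _ _ => by
  unfold fA; infer_instance

instance : ∀ r c, Decidable (fB m lam a T r c) := fun _ _ => by
  unfold fB; infer_instance

instance : ∀ r c, Decidable (bkfree m lam a T r c) := fun _ _ => by
  unfold bkfree; infer_instance

def sA (r : ℕ) : ℕ := ((Finset.range (lam r)).filter (fun c => fA m lam a T r c)).card
def sB (r : ℕ) : ℕ := ((Finset.range (lam r)).filter (fun c => fB m lam a T r c)).card
def sF (r : ℕ) : ℕ := ((Finset.range (lam r)).filter (fun c => bkfree m lam a T r c)).card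

def idx (r c : ℕ) : ℕ := ((Finset.range c).filter (fun c' => bkfree m lam a T r c')).card

def gval (r c : ℕ) : ℕ :=
  if bkfree m lam a T r c then (if idx m lam a T r c < sB m lam a T r then a else a + 1)
  else val m lam T r c

variable {m lam a T}

lemma bkfree_val {r c : ℕ} (h : bkfree m lam a T r c) :
    val m lam T r c = a ∨ val m lam T r c = a + 1 := by
  rcases h with h | h
  · exact Or.inl h.1
  · exact Or.inr h.1

lemma bkfree_cell (ha : a + 1 < m) {r c : ℕ} (h : bkfree m lam a T r c) :
    (r, c) ∈ youngCells m lam := by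
  rw [← val_lt_iff (T := T)]
  rcases bkfree_val h with h' | h' <;> omega

lemma sF_eq (ha : a + 1 < m) (r : ℕ) : sF m lam a T r = sA m lam a T r + sB m lam a T r := by
  unfold sF sA sB bkfree
  rw [Finset.filter_or, Finset.card_union_of_disjoint]
  rw [Finset.disjoint_filter]
  intro c _ h1 h2
  rw [fA] at h1; rw [fB] at h2
  omega

lemma sB_le_sF (ha : a + 1 < m) (r : ℕ) : sB m lam a T r ≤ sF m lam a T r := by
  rw [sF_eq ha]; omega

lemma gval_lt (ha : a + 1 < m) {r c : ℕ} (h : (r, c) ∈ youngCells m lam) :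
    gval m lam a T r c < m := by
  unfold gval
  split
  · split <;> omega
  · exact val_lt_iff.2 h

/-- The Bender–Knuth involution on fillings. -/
def bkMap (ha : a + 1 < m) : {p // p ∈ youngCells m lam} → Fin m := fun p =>
  ⟨gval m lam a T p.1.1 p.1.2, gval_lt ha p.2⟩

lemma val_bkMap (ha : a + 1 < m) (r c : ℕ) :
    val m lam (bkMap (T := T) ha) r c = gval m lam a T r c := by
  by_cases h : (r, c) ∈ youngCells m lam
  · rw [val_cell h]; rfl
  · rw [val_noncell h]
    unfold gval
    rw [if_neg, val_noncell h]
    intro hf; exact h (bkfree_cell ha hf)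

end Hyp2

section Main

variable {m : ℕ} {lam : ℕ → ℕ} {a : ℕ} {T : {p // p ∈ youngCells m lam} → Fin m}
variable (hlam : ∀ r, lam (r + 1) ≤ lam r) (hT : IsSSYT T) (ha : a + 1 < m)

include hlam hT ha in
/-- paired `a`'s propagate left within a block of `a`'s. -/
lemma pairedA_prop {r c c' : ℕ} (hcc : c' < c) (hv : val m lam T r c = a)
    (hv' : val m lam T r c' = a) (h : ¬ fA m lam a T r c) : ¬ fA m lam a T r c' := by
  have hb : val m lam T (r + 1) c = a + 1 := by
    by_contra hne; exact h ⟨hv, hne⟩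
  have hcell : (r + 1, c) ∈ youngCells m lam := (val_lt_iff (T := T)).1 (by omega)
  have hcell' : (r + 1, c') ∈ youngCells m lam := by
    rw [mem_youngCells] at hcell ⊢; omega
  have h1 : val m lam T (r + 1) c' ≤ val m lam T (r + 1) c := row_mono hT (le_of_lt hcc) hcell
  have h2 : val m lam T r c' < val m lam T (r + 1) c' := col_adj hlam hT hcell'
  intro hfa
  exact hfa.2 (by omega)

include hlam hT ha in
/-- paired `a+1`'s propagate right within a block of `a+1`'s. -/
lemma pairedB_prop {r c c' : ℕ} (hcc : c < c') (hv : val m lam T r c = a + 1)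
    (hv' : val m lam T r c' = a + 1) (h : ¬ fB m lam a T r c) : ¬ fB m lam a T r c' := by
  have hb : val m lam T (r - 1) c = a := by
    by_contra hne; exact h ⟨hv, hne⟩
  have hr : r ≠ 0 := by rintro rfl; simp only [Nat.zero_sub] at hb; omega
  have hr1 : r - 1 + 1 = r := by omega
  have hcellr : (r, c') ∈ youngCells m lam := (val_lt_iff (T := T)).1 (by omega)
  have hcell' : (r - 1, c') ∈ youngCells m lam := by
    have h3 := hlam (r - 1)
    rw [hr1] at h3
    rw [mem_youngCells] at hcellr ⊢
    exact ⟨by omega, by omega⟩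
  have h1 : val m lam T (r - 1) c ≤ val m lam T (r - 1) c' := row_mono hT (le_of_lt hcc) hcell'
  have h2 : val m lam T (r - 1) c' < val m lam T r c' := by
    have h4 := col_adj hlam hT (show (r - 1 + 1, c') ∈ youngCells m lam by rwa [hr1])
    rwa [hr1] at h4
  intro hfb
  exact hfb.2 (by omega)

include hlam hT ha in
/-- below a free cell the value exceeds `a+1`. -/
lemma free_below {r c : ℕ} (h : bkfree m lam a T r c) : a + 1 < val m lam T (r + 1) c := by
  by_cases hcell : (r + 1, c) ∈ youngCells m lam
  · have h2 := col_adj hlam hT hcell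
    rcases h with ⟨hv, hne⟩ | ⟨hv, _⟩
    · omega
    · omega
  · rw [val_noncell hcell]; omega

include hlam hT ha in
/-- above a free cell (in a positive row) the value is below `a`. -/
lemma free_above {r c : ℕ} (hr : r ≠ 0) (h : bkfree m lam a T r c) :
    val m lam T (r - 1) c < a := by
  have hc : (r, c) ∈ youngCells m lam := bkfree_cell ha h
  have hr1 : r - 1 + 1 = r := by omega
  have hcell : ((r - 1) + 1, c) ∈ youngCells m lam := by rwa [hr1]
  have h2 := col_adj hlam hT hcell
  rw [hr1] at h2
  rcases h with ⟨hv, _⟩ | ⟨hv, hne⟩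
  · omega
  · omega

include hlam hT ha in
/-- the BK map preserves the free cells. -/
lemma bkfree_bkMap (r c : ℕ) :
    bkfree m lam a (bkMap (T := T) ha) r c ↔ bkfree m lam a T r c := by
  constructor
  · -- contrapositive
    intro hg
    by_contra hf
    have hval : val m lam (bkMap (T := T) ha) r c = val m lam T r c := by
      rw [val_bkMap]; unfold gval; rw [if_neg hf]
    rcases bkfree_val hg with hv | hv
    · -- value a in bkMap hence in T; T not free at it, so below holds a+1 and is paired there
      rw [hval] at hv
      have hb : val m lam T (r + 1) c = a + 1 := by
        by_contra hne; exact hf (Or.inl ⟨hv, hne⟩)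
      -- (r+1,c) is not free in T
      have hnf : ¬ bkfree m lam a T (r + 1) c := by
        rintro (⟨h1, _⟩ | ⟨_, h2⟩)
        · omega
        · exact h2 (by simpa using hv)
      have : val m lam (bkMap (T := T) ha) (r + 1) c = a + 1 := by
        rw [val_bkMap]; unfold gval; rw [if_neg hnf]; exact hb
      rcases hg with ⟨_, hne⟩ | ⟨h1, _⟩
      · exact hne this
      · omega
    · -- value a+1
      rw [hval] at hv
      have hb : val m lam T (r - 1) c = a := by
        by_contra hne; exact hf (Or.inr ⟨hv, hne⟩)
      have hr : r ≠ 0 := by rintro rfl; simp only [Nat.zero_sub] at hb; omega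
      have hr1 : r - 1 + 1 = r := by omega
      have hnf : ¬ bkfree m lam a T (r - 1) c := by
        rintro (⟨_, h2⟩ | ⟨h1, _⟩)
        · apply h2
          rw [hr1]
          exact hv
        · omega
      have : val m lam (bkMap (T := T) ha) (r - 1) c = a := by
        rw [val_bkMap]; unfold gval; rw [if_neg hnf]; exact hb
      rcases hg with ⟨h1, _⟩ | ⟨_, hne⟩
      · omega
      · exact hne this
  · intro hf
    have hval : val m lam (bkMap (T := T) ha) r c = gval m lam a T r c := val_bkMap ha r c
    have hgv : gval m lam a T r c = a ∨ gval m lam a T r c = a + 1 := by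
      unfold gval; rw [if_pos hf]; split <;> simp
    -- below cell of bkMap has value > a+1
    have hbelow : val m lam (bkMap (T := T) ha) (r + 1) c = val m lam T (r + 1) c := by
      rw [val_bkMap]; unfold gval; rw [if_neg]
      rintro (⟨h1, _⟩ | ⟨h1, _⟩) <;>
        · have := free_below hlam hT ha hf; omega
    rcases hgv with hgv | hgv
    · left
      refine ⟨by rw [hval, hgv], ?_⟩
      rw [hbelow]
      have := free_below hlam hT ha hf
      omega
    · right
      refine ⟨by rw [hval, hgv], ?_⟩
      by_cases hr : r = 0
      · subst hr
        simp only [Nat.zero_sub]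
        rw [hval, hgv]
        omega
      · have habove := free_above hlam hT ha hr hf
        have : val m lam (bkMap (T := T) ha) (r - 1) c = val m lam T (r - 1) c := by
          rw [val_bkMap]; unfold gval; rw [if_neg]
          rintro (⟨h1, _⟩ | ⟨h1, _⟩) <;> omega
        omega

end Main

section Count

open Finset

lemma rank_count (F : Finset ℕ) : ∀ t, t ≤ F.card →
    ((F.filter (fun x => ((F.filter (fun y => y < x)).card < t))).card = t) := by
  induction F using Finset.induction_on_max with
  | empty =>
    intro t ht
    simp only [Finset.card_empty, Nat.le_zero] at ht
    simp [ht]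
  | insert a s ha ih =>
    intro t ht
    have hanotin : a ∉ s := fun h => lt_irrefl a (ha a h)
    rw [Finset.card_insert_of_notMem hanotin] at ht
    have hidxa : ((insert a s).filter (fun y => y < a)).card = s.card := by
      rw [Finset.filter_insert, if_neg (lt_irrefl a), Finset.filter_true_of_mem ha]
    have hcong : s.filter (fun x => ((insert a s).filter (fun y => y < x)).card < t)
        = s.filter (fun x => ((s.filter (fun y => y < x)).card < t)) := by
      apply Finset.filter_congr
      intro x hx
      rw [Finset.filter_insert, if_neg (asymm (ha x hx))]
    rw [Finset.filter_insert]
    split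
    next hc =>
      rw [hidxa] at hc
      have hfull : s.filter (fun x => ((insert a s).filter (fun y => y < x)).card < t) = s := by
        rw [hcong]
        apply Finset.filter_true_of_mem
        intro x hx
        exact lt_of_le_of_lt (Finset.card_filter_le s _) (by omega)
      rw [hfull, Finset.card_insert_of_notMem hanotin]
      omega
    next hc =>
      rw [hidxa] at hc
      rw [hcong, ih t (by omega)]

end Count

section Main2

variable {m : ℕ} {lam : ℕ → ℕ} {a : ℕ} {T : {p // p ∈ youngCells m lam} → Fin m}
variable (hlam : ∀ r, lam (r + 1) ≤ lam r) (hT : IsSSYT T) (ha : a + 1 < m)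

open Finset

include ha in
lemma idx_eq_filter (r c : ℕ) :
    idx m lam a T r c
      = (((range (lam r)).filter (fun c' => bkfree m lam a T r c')).filter
          (fun y => y < c)).card := by
  unfold idx
  congr 1
  ext x
  simp only [mem_filter, mem_range]
  constructor
  · rintro ⟨h1, h2⟩
    exact ⟨⟨(mem_youngCells.1 (bkfree_cell ha h2)).2, h2⟩, h1⟩
  · rintro ⟨⟨_, h2⟩, h3⟩
    exact ⟨h3, h2⟩

include ha in
lemma count_free_idx_lt (r : ℕ) {t : ℕ} (htle : t ≤ sF m lam a T r) :
    ((range (lam r)).filter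
      (fun c => bkfree m lam a T r c ∧ idx m lam a T r c < t)).card = t := by
  have h1 : (range (lam r)).filter
      (fun c => bkfree m lam a T r c ∧ idx m lam a T r c < t)
      = ((range (lam r)).filter (fun c => bkfree m lam a T r c)).filter
          (fun c => idx m lam a T r c < t) := by
    rw [Finset.filter_filter]
  rw [h1]
  have h2 : ((range (lam r)).filter (fun c => bkfree m lam a T r c)).filter
        (fun c => idx m lam a T r c < t)
      = ((range (lam r)).filter (fun c => bkfree m lam a T r c)).filter
        (fun c => ((((range (lam r)).filter (fun c' => bkfree m lam a T r c')).filter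
          (fun y => y < c)).card < t)) := by
    apply Finset.filter_congr
    intro x _
    rw [idx_eq_filter ha]
  rw [h2]
  exact rank_count _ t htle

include ha in
lemma count_free_idx_ge (r : ℕ) {t : ℕ} (htle : t ≤ sF m lam a T r) :
    ((range (lam r)).filter
      (fun c => bkfree m lam a T r c ∧ ¬ idx m lam a T r c < t)).card
      = sF m lam a T r - t := by
  have key := Finset.card_filter_add_card_filter_not
    (s := (range (lam r)).filter (fun c => bkfree m lam a T r c))
    (p := fun c => idx m lam a T r c < t)
  have h1 : (range (lam r)).filter
      (fun c => bkfree m lam a T r c ∧ idx m lam a T r c < t)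
      = ((range (lam r)).filter (fun c => bkfree m lam a T r c)).filter
          (fun c => idx m lam a T r c < t) := by rw [Finset.filter_filter]
  have h2 : (range (lam r)).filter
      (fun c => bkfree m lam a T r c ∧ ¬ idx m lam a T r c < t)
      = ((range (lam r)).filter (fun c => bkfree m lam a T r c)).filter
          (fun c => ¬ idx m lam a T r c < t) := by rw [Finset.filter_filter]
  have h3 := count_free_idx_lt (T := T) ha r htle
  rw [h1] at h3
  rw [h2]
  have : sF m lam a T r
      = ((range (lam r)).filter (fun c => bkfree m lam a T r c)).card := rfl
  omega

include hT ha in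
/-- among the free cells of a row, the `a`'s are exactly the first `sA` ones. -/
lemma fA_iff_idx_lt {r c : ℕ} (hfree : bkfree m lam a T r c) :
    fA m lam a T r c ↔ idx m lam a T r c < sA m lam a T r := by
  have hcell := bkfree_cell ha hfree
  constructor
  · intro hfa
    have hsub : (range c).filter (fun c' => bkfree m lam a T r c')
        ⊆ ((range (lam r)).filter (fun c' => fA m lam a T r c')).erase c := by
      intro x hx
      rw [mem_filter, mem_range] at hx
      obtain ⟨hxc, hxf⟩ := hx
      have hxcell := bkfree_cell ha hxf
      have hxa : val m lam T r x = a := by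
        have h1 : val m lam T r x ≤ val m lam T r c := row_mono hT (le_of_lt hxc) hcell
        rcases bkfree_val hxf with h | h
        · exact h
        · rw [hfa.1] at h1; omega
      have hxfa : fA m lam a T r x := by
        rcases hxf with h | ⟨h1, _⟩
        · exact h
        · omega
      rw [Finset.mem_erase, mem_filter, mem_range]
      exact ⟨by omega, (mem_youngCells.1 hxcell).2, hxfa⟩
    have hmem : c ∈ (range (lam r)).filter (fun c' => fA m lam a T r c') := by
      rw [mem_filter, mem_range]
      exact ⟨(mem_youngCells.1 hcell).2, hfa⟩
    have := Finset.card_le_card hsub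
    rw [Finset.card_erase_of_mem hmem] at this
    have hpos : 0 < sA m lam a T r := Finset.card_pos.2 ⟨c, hmem⟩
    unfold idx sA at *
    omega
  · intro hlt
    by_contra hfa
    have hfb : fB m lam a T r c := by
      rcases hfree with h | h
      · exact absurd h hfa
      · exact h
    have hsub : (range (lam r)).filter (fun c' => fA m lam a T r c')
        ⊆ (range c).filter (fun c' => bkfree m lam a T r c') := by
      intro x hx
      rw [mem_filter, mem_range] at hx
      obtain ⟨hxlam, hxfa⟩ := hx
      have hxc : x < c := by
        by_contra hge
        have h1 : val m lam T r c ≤ val m lam T r x :=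
          row_mono hT (by omega) (mem_youngCells.2 ⟨(mem_youngCells.1 hcell).1, hxlam⟩)
        rw [hfb.1, hxfa.1] at h1; omega
      rw [mem_filter, mem_range]
      exact ⟨hxc, Or.inl hxfa⟩
    have := Finset.card_le_card hsub
    unfold idx sA at *
    omega

end Main2

section Main3

variable {m : ℕ} {lam : ℕ → ℕ} {a : ℕ} {T : {p // p ∈ youngCells m lam} → Fin m}
variable (hlam : ∀ r, lam (r + 1) ≤ lam r) (hT : IsSSYT T) (ha : a + 1 < m)

open Finset

lemma idx_mono {r c c' : ℕ} (h : c ≤ c') : idx m lam a T r c ≤ idx m lam a T r c' :=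
  Finset.card_le_card (Finset.filter_subset_filter _ (Finset.range_subset_range.2 h))

lemma gval_le (r c : ℕ) (hf : bkfree m lam a T r c) : gval m lam a T r c ≤ a + 1 := by
  unfold gval; rw [if_pos hf]; split <;> omega

lemma gval_ge (r c : ℕ) (hf : bkfree m lam a T r c) : a ≤ gval m lam a T r c := by
  unfold gval; rw [if_pos hf]; split <;> omega

include hlam hT ha in
lemma gval_row {r c : ℕ} (h : (r, c + 1) ∈ youngCells m lam) :
    gval m lam a T r c ≤ gval m lam a T r (c + 1) := by
  have h0 : (r, c) ∈ youngCells m lam := by rw [mem_youngCells] at h ⊢; omega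
  have hadj := row_adj hT (T := T) h
  by_cases hf1 : bkfree m lam a T r c <;> by_cases hf2 : bkfree m lam a T r (c + 1)
  · -- both free
    unfold gval
    rw [if_pos hf1, if_pos hf2]
    have hmono := idx_mono (m := m) (lam := lam) (a := a) (T := T) (r := r)
      (Nat.le_succ c)
    split
    next h1 => split <;> omega
    next h1 =>
      rw [if_neg]
      intro h2; exact h1 (lt_of_le_of_lt hmono h2)
  · -- c free, c+1 not free
    have hval1 : gval m lam a T r (c + 1) = val m lam T r (c + 1) := by
      unfold gval; rw [if_neg hf2]
    have hge : a + 1 ≤ val m lam T r (c + 1) := by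
      by_contra hlt
      have hv1 : val m lam T r c = a := by
        rcases bkfree_val hf1 with hv | hv
        · exact hv
        · omega
      have hv2 : val m lam T r (c + 1) = a := by omega
      have hfa1 : fA m lam a T r c := by
        rcases hf1 with hh | ⟨hh, _⟩
        · exact hh
        · omega
      have hnfa2 : ¬ fA m lam a T r (c + 1) := fun hh => hf2 (Or.inl hh)
      exact pairedA_prop hlam hT ha (Nat.lt_succ_self c) hv2 hv1 hnfa2 hfa1
    rw [hval1]
    exact le_trans (gval_le r c hf1) hge
  · -- c not free, c+1 free
    have hval1 : gval m lam a T r c = val m lam T r c := by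
      unfold gval; rw [if_neg hf1]
    rw [hval1]
    have hle2 : val m lam T r (c + 1) ≤ a + 1 := by
      rcases bkfree_val hf2 with hv | hv <;> omega
    rcases Nat.lt_or_ge (gval m lam a T r (c + 1)) (a + 1) with hg | hg
    · -- gval (c+1) = a
      have hga : gval m lam a T r (c + 1) = a := by
        have := gval_ge (m := m) (lam := lam) (a := a) (T := T) r (c + 1) hf2
        omega
      rw [hga]
      by_contra hgt
      have hvc : val m lam T r c = a + 1 := by omega
      have hvc1 : val m lam T r (c + 1) = a + 1 := by omega
      have hfb2 : fB m lam a T r (c + 1) := by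
        rcases hf2 with ⟨hh, _⟩ | hh
        · omega
        · exact hh
      have hnfb1 : ¬ fB m lam a T r c := fun hh => hf1 (Or.inr hh)
      exact pairedB_prop hlam hT ha (Nat.lt_succ_self c) hvc hvc1 hnfb1 hfb2
    · omega
  · -- neither free
    unfold gval
    rw [if_neg hf1, if_neg hf2]
    exact hadj

include hlam hT ha in
lemma gval_col {r c : ℕ} (h : (r + 1, c) ∈ youngCells m lam) :
    gval m lam a T r c < gval m lam a T (r + 1) c := by
  have hadj := col_adj hlam hT (T := T) h
  by_cases hf1 : bkfree m lam a T r c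
  · have hbelow := free_below hlam hT ha hf1
    have hnf2 : ¬ bkfree m lam a T (r + 1) c := by
      intro hh
      rcases bkfree_val hh with hv | hv <;> omega
    have : gval m lam a T (r + 1) c = val m lam T (r + 1) c := by
      unfold gval; rw [if_neg hnf2]
    have := gval_le (m := m) (lam := lam) (a := a) (T := T) r c hf1
    unfold gval
    rw [if_neg hnf2, if_pos hf1]
    split <;> omega
  · have hval1 : gval m lam a T r c = val m lam T r c := by
      unfold gval; rw [if_neg hf1]
    rw [hval1]
    by_cases hf2 : bkfree m lam a T (r + 1) c
    · have hge := gval_ge (m := m) (lam := lam) (a := a) (T := T) (r + 1) c hf2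
      rcases bkfree_val hf2 with hv | hv
      · omega
      · -- value below is a+1, so it is an fB, hence val r c ≠ a
        have hfb : fB m lam a T (r + 1) c := by
          rcases hf2 with ⟨hh, _⟩ | hh
          · omega
          · exact hh
        have : val m lam T ((r + 1) - 1) c ≠ a := hfb.2
        simp only [Nat.add_sub_cancel] at this
        omega
    · have : gval m lam a T (r + 1) c = val m lam T (r + 1) c := by
        unfold gval; rw [if_neg hf2]
      omega

include hlam hT ha in
lemma bkMap_isSSYT : IsSSYT (bkMap (T := T) ha) := by
  constructor
  · rintro ⟨⟨r, c⟩, hp⟩ ⟨⟨r', c'⟩, hq⟩ h1 h2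
    simp only at h1 h2
    subst h1
    subst h2
    show (⟨gval m lam a T r c, _⟩ : Fin m) ≤ ⟨gval m lam a T r (c + 1), _⟩
    rw [Fin.le_def]
    exact gval_row hlam hT ha hq
  · rintro ⟨⟨r, c⟩, hp⟩ ⟨⟨r', c'⟩, hq⟩ h1 h2
    simp only at h1 h2
    subst h1
    subst h2
    show (⟨gval m lam a T r c, _⟩ : Fin m) < ⟨gval m lam a T (r + 1) c, _⟩
    rw [Fin.lt_def]
    exact gval_col hlam hT ha hq

include hlam hT ha in
lemma idx_bkMap (r c : ℕ) : idx m lam a (bkMap (T := T) ha) r c = idx m lam a T r c := by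
  unfold idx
  congr 1
  apply Finset.filter_congr
  intro x _
  exact bkfree_bkMap hlam hT ha r x

include hlam hT ha in
lemma fA_bkMap_iff (r c : ℕ) :
    fA m lam a (bkMap (T := T) ha) r c
      ↔ bkfree m lam a T r c ∧ idx m lam a T r c < sB m lam a T r := by
  constructor
  · intro hfa
    have hfree : bkfree m lam a T r c := (bkfree_bkMap hlam hT ha r c).1 (Or.inl hfa)
    refine ⟨hfree, ?_⟩
    have hv := hfa.1
    rw [val_bkMap] at hv
    unfold gval at hv
    rw [if_pos hfree] at hv
    by_contra hge
    rw [if_neg hge] at hv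
    omega
  · rintro ⟨hfree, hlt⟩
    have hg : val m lam (bkMap (T := T) ha) r c = a := by
      rw [val_bkMap]; unfold gval; rw [if_pos hfree, if_pos hlt]
    rcases (bkfree_bkMap hlam hT ha r c).2 hfree with hh | hh
    · exact hh
    · exfalso; have h2 := hh.1; omega

include hlam hT ha in
lemma fB_bkMap_iff (r c : ℕ) :
    fB m lam a (bkMap (T := T) ha) r c
      ↔ bkfree m lam a T r c ∧ ¬ idx m lam a T r c < sB m lam a T r := by
  constructor
  · intro hfb
    have hfree : bkfree m lam a T r c := (bkfree_bkMap hlam hT ha r c).1 (Or.inr hfb)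
    refine ⟨hfree, ?_⟩
    have hv := hfb.1
    rw [val_bkMap] at hv
    unfold gval at hv
    rw [if_pos hfree] at hv
    intro hlt
    rw [if_pos hlt] at hv
    omega
  · rintro ⟨hfree, hge⟩
    have hg : val m lam (bkMap (T := T) ha) r c = a + 1 := by
      rw [val_bkMap]; unfold gval; rw [if_pos hfree, if_neg hge]
    rcases (bkfree_bkMap hlam hT ha r c).2 hfree with hh | hh
    · exfalso; have h2 := hh.1; omega
    · exact hh

include hlam hT ha in
lemma sB_bkMap (r : ℕ) : sB m lam a (bkMap (T := T) ha) r = sA m lam a T r := by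
  unfold sB
  have : (range (lam r)).filter (fun c => fB m lam a (bkMap (T := T) ha) r c)
      = (range (lam r)).filter
          (fun c => bkfree m lam a T r c ∧ ¬ idx m lam a T r c < sB m lam a T r) := by
    apply Finset.filter_congr
    intro x _
    exact fB_bkMap_iff hlam hT ha r x
  rw [this, count_free_idx_ge ha r (sB_le_sF ha r)]
  rw [sF_eq ha r]
  omega

include hlam hT ha in
lemma bkMap_involutive : bkMap (T := bkMap (T := T) ha) ha = T := by
  funext p
  obtain ⟨⟨r, c⟩, hp⟩ := p
  apply Fin.ext
  show gval m lam a (bkMap (T := T) ha) r c = (T ⟨(r, c), hp⟩ : ℕ)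
  rw [← val_cell (T := T) hp]
  by_cases hf : bkfree m lam a T r c
  · have hf' : bkfree m lam a (bkMap (T := T) ha) r c := (bkfree_bkMap hlam hT ha r c).2 hf
    unfold gval
    rw [if_pos hf', idx_bkMap hlam hT ha, sB_bkMap hlam hT ha]
    by_cases hfa : fA m lam a T r c
    · rw [if_pos ((fA_iff_idx_lt hT ha hf).1 hfa)]
      exact hfa.1.symm
    · rw [if_neg (fun hlt => hfa ((fA_iff_idx_lt hT ha hf).2 hlt))]
      rcases hf with hh | hh
      · exact absurd hh hfa
      · exact hh.1.symm
  · have hf' : ¬ bkfree m lam a (bkMap (T := T) ha) r c :=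
      fun hh => hf ((bkfree_bkMap hlam hT ha r c).1 hh)
    unfold gval
    rw [if_neg hf', val_bkMap]
    unfold gval
    rw [if_neg hf]

end Main3

section Counts

open Finset

variable (m : ℕ) (lam : ℕ → ℕ) (a : ℕ) (T : {p // p ∈ youngCells m lam} → Fin m)

def nrow (v r : ℕ) : ℕ := ((range (lam r)).filter (fun c => val m lam T r c = v)).card
def pA (r : ℕ) : ℕ :=
  ((range (lam r)).filter (fun c => val m lam T r c = a ∧ ¬ fA m lam a T r c)).card
def pB (r : ℕ) : ℕ :=
  ((range (lam r)).filter (fun c => val m lam T r c = a + 1 ∧ ¬ fB m lam a T r c)).card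

variable {m lam a T}
variable (hlam : ∀ r, lam (r + 1) ≤ lam r) (hT : IsSSYT T) (ha : a + 1 < m)

lemma nrow_a (r : ℕ) : nrow m lam T a r = sA m lam a T r + pA m lam a T r := by
  unfold nrow sA pA
  rw [← Finset.card_union_of_disjoint]
  · congr 1
    rw [← Finset.filter_or]
    apply Finset.filter_congr
    intro c _
    unfold fA
    constructor
    · intro hv
      by_cases hb : val m lam T (r + 1) c ≠ a + 1
      · exact Or.inl ⟨hv, hb⟩
      · exact Or.inr ⟨hv, fun hh => hh.2 (by tauto)⟩
    · rintro (hh | hh)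
      · exact hh.1
      · exact hh.1
  · rw [Finset.disjoint_filter]
    intro c _ h1 h2
    exact h2.2 h1

lemma nrow_b (r : ℕ) : nrow m lam T (a + 1) r = sB m lam a T r + pB m lam a T r := by
  unfold nrow sB pB
  rw [← Finset.card_union_of_disjoint]
  · congr 1
    rw [← Finset.filter_or]
    apply Finset.filter_congr
    intro c _
    unfold fB
    constructor
    · intro hv
      by_cases hb : val m lam T (r - 1) c ≠ a
      · exact Or.inl ⟨hv, hb⟩
      · exact Or.inr ⟨hv, fun hh => hh.2 (by tauto)⟩
    · rintro (hh | hh)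
      · exact hh.1
      · exact hh.1
  · rw [Finset.disjoint_filter]
    intro c _ h1 h2
    exact h2.2 h1

include ha in
lemma pB_zero : pB m lam a T 0 = 0 := by
  unfold pB
  rw [Finset.card_eq_zero, Finset.filter_eq_empty_iff]
  intro c _
  rintro ⟨h1, h2⟩
  refine h2 ⟨h1, ?_⟩
  simp only [Nat.zero_sub]
  omega

include ha in
lemma pB_succ (r : ℕ) : pB m lam a T (r + 1) = pA m lam a T r := by
  unfold pB pA
  congr 1
  ext c
  simp only [mem_filter, mem_range]
  constructor
  · rintro ⟨hc, h1, h2⟩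
    have h3 : val m lam T r c = a := by
      by_contra hne
      exact h2 ⟨h1, by simpa using hne⟩
    have hcell : (r, c) ∈ youngCells m lam := (val_lt_iff (T := T)).1 (by omega)
    refine ⟨(mem_youngCells.1 hcell).2, h3, ?_⟩
    rintro ⟨_, h4⟩
    exact h4 h1
  · rintro ⟨hc, h1, h2⟩
    have h3 : val m lam T (r + 1) c = a + 1 := by
      by_contra hne
      exact h2 ⟨h1, hne⟩
    have hcell : (r + 1, c) ∈ youngCells m lam := (val_lt_iff (T := T)).1 (by omega)
    refine ⟨(mem_youngCells.1 hcell).2, h3, ?_⟩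
    rintro ⟨_, h4⟩
    apply h4
    simpa using h1

include ha in
lemma pA_last : pA m lam a T (m - 1) = 0 := by
  unfold pA
  rw [Finset.card_eq_zero, Finset.filter_eq_empty_iff]
  intro c _
  rintro ⟨h1, h2⟩
  apply h2
  refine ⟨h1, ?_⟩
  have hnc : (m - 1 + 1, c) ∉ youngCells m lam := by
    rw [mem_youngCells]
    rintro ⟨h3, _⟩
    omega
  rw [val_noncell hnc]
  omega

include ha in
lemma sum_pA_eq_sum_pB :
    ∑ r ∈ range m, pA m lam a T r = ∑ r ∈ range m, pB m lam a T r := by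
  obtain ⟨N, hN⟩ : ∃ N, m = N + 1 := ⟨m - 1, by omega⟩
  have hrange : range m = range (N + 1) := by rw [hN]
  rw [hrange, Finset.sum_range_succ, Finset.sum_range_succ']
  rw [pB_zero ha, add_zero]
  have h1 : pA m lam a T N = 0 := by
    have h2 := pA_last (T := T) ha
    rwa [show m - 1 = N by omega] at h2
  rw [h1, add_zero]
  exact Finset.sum_congr rfl fun r _ => (pB_succ ha r).symm

include hlam hT ha in
lemma pA_bkMap (r : ℕ) : pA m lam a (bkMap (T := T) ha) r = pA m lam a T r := by
  unfold pA
  congr 1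
  apply Finset.filter_congr
  intro c _
  rw [val_bkMap]
  constructor
  · rintro ⟨h1, h2⟩
    have hnf : ¬ bkfree m lam a T r c := by
      intro hf
      apply h2
      apply (fA_bkMap_iff hlam hT ha r c).2
      refine ⟨hf, ?_⟩
      unfold gval at h1
      rw [if_pos hf] at h1
      by_contra hge
      rw [if_neg hge] at h1
      omega
    have hval : val m lam T r c = a := by
      unfold gval at h1; rw [if_neg hnf] at h1; exact h1
    exact ⟨hval, fun hfa => hnf (Or.inl hfa)⟩
  · rintro ⟨h1, h2⟩
    have hnf : ¬ bkfree m lam a T r c := by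
      rintro (hh | hh)
      · exact h2 hh
      · have := hh.1; omega
    refine ⟨by unfold gval; rw [if_neg hnf]; exact h1, ?_⟩
    intro hfa
    exact hnf ((fA_bkMap_iff hlam hT ha r c).1 hfa).1

include hlam hT ha in
lemma pB_bkMap (r : ℕ) : pB m lam a (bkMap (T := T) ha) r = pB m lam a T r := by
  unfold pB
  congr 1
  apply Finset.filter_congr
  intro c _
  rw [val_bkMap]
  constructor
  · rintro ⟨h1, h2⟩
    have hnf : ¬ bkfree m lam a T r c := by
      intro hf
      apply h2
      apply (fB_bkMap_iff hlam hT ha r c).2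
      refine ⟨hf, ?_⟩
      unfold gval at h1
      rw [if_pos hf] at h1
      intro hlt
      rw [if_pos hlt] at h1
      omega
    have hval : val m lam T r c = a + 1 := by
      unfold gval at h1; rw [if_neg hnf] at h1; exact h1
    exact ⟨hval, fun hfb => hnf (Or.inr hfb)⟩
  · rintro ⟨h1, h2⟩
    have hnf : ¬ bkfree m lam a T r c := by
      rintro (hh | hh)
      · have := hh.1; omega
      · exact h2 hh
    refine ⟨by unfold gval; rw [if_neg hnf]; exact h1, ?_⟩
    intro hfb
    exact hnf ((fB_bkMap_iff hlam hT ha r c).1 hfb).1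

include hlam hT ha in
lemma sA_bkMap (r : ℕ) : sA m lam a (bkMap (T := T) ha) r = sB m lam a T r := by
  unfold sA
  have heq : (range (lam r)).filter (fun c => fA m lam a (bkMap (T := T) ha) r c)
      = (range (lam r)).filter
          (fun c => bkfree m lam a T r c ∧ idx m lam a T r c < sB m lam a T r) := by
    apply Finset.filter_congr
    intro c _
    exact fA_bkMap_iff hlam hT ha r c
  rw [heq, count_free_idx_lt ha r (sB_le_sF ha r)]

include hlam hT ha in
lemma nrow_bkMap_a (r : ℕ) :
    nrow m lam (bkMap (T := T) ha) a r = sB m lam a T r + pA m lam a T r := by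
  rw [nrow_a, sA_bkMap hlam hT ha, pA_bkMap hlam hT ha]

include hlam hT ha in
lemma nrow_bkMap_b (r : ℕ) :
    nrow m lam (bkMap (T := T) ha) (a + 1) r = sA m lam a T r + pB m lam a T r := by
  rw [nrow_b, sB_bkMap hlam hT ha, pB_bkMap hlam hT ha]

include ha in
lemma nrow_bkMap_other {v : ℕ} (hv1 : v ≠ a) (hv2 : v ≠ a + 1) (r : ℕ) :
    nrow m lam (bkMap (T := T) ha) v r = nrow m lam T v r := by
  unfold nrow
  congr 1
  apply Finset.filter_congr
  intro c _
  rw [val_bkMap]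
  unfold gval
  by_cases hf : bkfree m lam a T r c
  · rw [if_pos hf]
    have hval := bkfree_val hf
    constructor
    · intro h1; exfalso; revert h1; split <;> omega
    · intro h1; omega
  · rw [if_neg hf]

end Counts

section SumNrow

open Finset

variable {m : ℕ} {lam : ℕ → ℕ} {a : ℕ} {T : {p // p ∈ youngCells m lam} → Fin m}
variable (hlam : ∀ r, lam (r + 1) ≤ lam r) (hT : IsSSYT T) (ha : a + 1 < m)

include hlam hT ha in
lemma sum_nrow_bkMap (v : ℕ) :
    ∑ r ∈ range m, nrow m lam (bkMap (T := T) ha) v r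
      = ∑ r ∈ range m, nrow m lam T (if v = a then a + 1 else if v = a + 1 then a else v) r := by
  by_cases h1 : v = a
  · subst h1
    rw [if_pos rfl]
    have lhs : ∑ r ∈ range m, nrow m lam (bkMap (T := T) ha) v r
        = ∑ r ∈ range m, sB m lam v T r + ∑ r ∈ range m, pA m lam v T r := by
      rw [← Finset.sum_add_distrib]
      exact Finset.sum_congr rfl fun r _ => nrow_bkMap_a hlam hT ha r
    have rhs : ∑ r ∈ range m, nrow m lam T (v + 1) r
        = ∑ r ∈ range m, sB m lam v T r + ∑ r ∈ range m, pB m lam v T r := by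
      rw [← Finset.sum_add_distrib]
      exact Finset.sum_congr rfl fun r _ => nrow_b r
    rw [lhs, rhs, sum_pA_eq_sum_pB (T := T) ha]
  · by_cases h2 : v = a + 1
    · subst h2
      rw [if_neg h1, if_pos rfl]
      have lhs : ∑ r ∈ range m, nrow m lam (bkMap (T := T) ha) (a + 1) r
          = ∑ r ∈ range m, sA m lam a T r + ∑ r ∈ range m, pB m lam a T r := by
        rw [← Finset.sum_add_distrib]
        exact Finset.sum_congr rfl fun r _ => nrow_bkMap_b hlam hT ha r
      have rhs : ∑ r ∈ range m, nrow m lam T a r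
          = ∑ r ∈ range m, sA m lam a T r + ∑ r ∈ range m, pA m lam a T r := by
        rw [← Finset.sum_add_distrib]
        exact Finset.sum_congr rfl fun r _ => nrow_a r
      rw [lhs, rhs, sum_pA_eq_sum_pB (T := T) ha]
    · rw [if_neg h1, if_neg h2]
      exact Finset.sum_congr rfl fun r _ => nrow_bkMap_other ha h1 h2 r

end SumNrow

section Swap

open Finset

variable {m : ℕ} {lam : ℕ → ℕ}

lemma mem_ssytFinset {T : {p // p ∈ youngCells m lam} → Fin m} :
    T ∈ ssytFinset m lam ↔ IsSSYT T := by
  classical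
  simp [ssytFinset]

lemma cells_filter_card (P : ℕ × ℕ → Prop) [DecidablePred P] :
    ((youngCells m lam).filter P).card
      = ∑ r ∈ range m, ((range (lam r)).filter (fun c => P (r, c))).card := by
  unfold youngCells
  rw [Finset.filter_biUnion, Finset.card_biUnion]
  · apply Finset.sum_congr rfl
    intro r _
    rw [Finset.filter_image, Finset.card_image_of_injective]
    intro c1 c2 h
    exact (Prod.mk.injEq _ _ _ _ ▸ h).2
  · intro r _ r' _ hne
    rw [Function.onFun_apply, Finset.disjoint_left]
    rintro q hq hq'
    rw [Finset.mem_filter, Finset.mem_image] at hq hq'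
    obtain ⟨⟨c, _, rfl⟩, _⟩ := hq
    obtain ⟨⟨c', _, heq⟩, _⟩ := hq'
    exact hne (congrArg Prod.fst heq).symm

lemma card_fiber_eq_sum_nrow (S : {p // p ∈ youngCells m lam} → Fin m) (v : Fin m) :
    (Finset.univ.filter (fun p => S p = v)).card
      = ∑ r ∈ range m, nrow m lam S (v : ℕ) r := by
  classical
  have h1 : (Finset.univ.filter (fun p => S p = v)).card
      = ((youngCells m lam).filter (fun q => val m lam S q.1 q.2 = (v : ℕ))).card := by
    apply Finset.card_bij (fun p _ => p.1)
    · rintro ⟨⟨r, c⟩, hp⟩ hmem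
      rw [Finset.mem_filter] at hmem ⊢
      refine ⟨hp, ?_⟩
      rw [val_cell hp]
      exact congrArg Fin.val hmem.2
    · rintro ⟨q1, h1⟩ _ ⟨q2, h2⟩ _ h
      exact Subtype.ext h
    · intro q hq
      rw [Finset.mem_filter] at hq
      refine ⟨⟨q, hq.1⟩, ?_, rfl⟩
      rw [Finset.mem_filter]
      refine ⟨Finset.mem_univ _, ?_⟩
      apply Fin.ext
      have h2 := hq.2
      rw [val_cell hq.1] at h2
      exact h2
  rw [h1]
  exact cells_filter_card _

lemma prod_fiber (x : Fin m → ℂ) (S : {p // p ∈ youngCells m lam} → Fin m) :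
    ∏ p, x (S p) = ∏ v : Fin m, x v ^ (Finset.univ.filter (fun p => S p = v)).card := by
  classical
  rw [Finset.prod_comp x S]
  apply Finset.prod_subset (Finset.subset_univ _)
  intro v _ hv
  have he : (Finset.univ.filter (fun p => S p = v)) = ∅ := by
    rw [Finset.filter_eq_empty_iff]
    intro p _
    intro hp
    exact hv (Finset.mem_image.2 ⟨p, Finset.mem_univ p, hp⟩)
  rw [he]
  simp

variable (hlam : ∀ r, lam (r + 1) ≤ lam r)

include hlam in
lemma schur_swap_adj (u w : Fin m) (huw : (w : ℕ) = (u : ℕ) + 1) (x : Fin m → ℂ) :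
    schur m lam (x ∘ Equiv.swap u w) = schur m lam x := by
  classical
  have ha : (u : ℕ) + 1 < m := huw ▸ w.isLt
  unfold schur
  apply Finset.sum_nbij' (i := fun T => bkMap (a := (u : ℕ)) (T := T) ha)
    (j := fun T => bkMap (a := (u : ℕ)) (T := T) ha)
  · intro T hT
    exact mem_ssytFinset.2 (bkMap_isSSYT hlam (mem_ssytFinset.1 hT) ha)
  · intro T hT
    exact mem_ssytFinset.2 (bkMap_isSSYT hlam (mem_ssytFinset.1 hT) ha)
  · intro T hT
    exact bkMap_involutive hlam (mem_ssytFinset.1 hT) ha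
  · intro T hT
    exact bkMap_involutive hlam (mem_ssytFinset.1 hT) ha
  · intro T hTmem
    have hT : IsSSYT T := mem_ssytFinset.1 hTmem
    calc ∏ p, (x ∘ Equiv.swap u w) (T p)
        = ∏ v : Fin m, x v ^ (Finset.univ.filter
            (fun p => Equiv.swap u w (T p) = v)).card := prod_fiber x _
      _ = ∏ v : Fin m, x v ^ (Finset.univ.filter
            (fun p => bkMap (a := (u : ℕ)) (T := T) ha p = v)).card := ?_
      _ = ∏ p, x (bkMap (a := (u : ℕ)) (T := T) ha p) := (prod_fiber x _).symm
    apply Finset.prod_congr rfl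
    intro v _
    congr 1
    have h2 : (Finset.univ.filter (fun p => Equiv.swap u w (T p) = v)).card
        = (Finset.univ.filter (fun p => T p = Equiv.swap u w v)).card := by
      congr 1
      apply Finset.filter_congr
      intro p _
      rw [Equiv.apply_eq_iff_eq_symm_apply, Equiv.symm_swap]
    rw [h2, card_fiber_eq_sum_nrow, card_fiber_eq_sum_nrow,
      sum_nrow_bkMap hlam hT ha (v : ℕ)]
    congr 1
    -- identify the swapped value
    by_cases hvu : v = u
    · subst hvu
      rw [Equiv.swap_apply_left, if_pos rfl, huw]
    · by_cases hvw : v = w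
      · subst hvw
        rw [Equiv.swap_apply_right, if_neg (by omega), if_pos huw]
      · rw [Equiv.swap_apply_of_ne_of_ne hvu hvw,
          if_neg (fun h => hvu (Fin.ext h)), if_neg (fun h => hvw (Fin.ext (by omega)))]

include hlam in
lemma schur_comp_perm (σ : Equiv.Perm (Fin m)) (x : Fin m → ℂ) :
    schur m lam (x ∘ σ) = schur m lam x := by
  classical
  -- first: arbitrary swaps, by induction on the distance
  have swap_dist : ∀ d : ℕ, ∀ u w : Fin m, (w : ℕ) = (u : ℕ) + d + 1 →
      ∀ y : Fin m → ℂ, schur m lam (y ∘ Equiv.swap u w) = schur m lam y := by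
    intro d
    induction d with
    | zero =>
      intro u w hw y
      exact schur_swap_adj hlam u w (by omega) y
    | succ d ih =>
      intro u w hw y
      have hu1 : (u : ℕ) + 1 < m := by have := w.isLt; omega
      set u1 : Fin m := ⟨(u : ℕ) + 1, hu1⟩ with hu1def
      have hne1 : Equiv.swap u1 w u = u := by
        apply Equiv.swap_apply_of_ne_of_ne
        · intro h; have := congrArg Fin.val h; simp [hu1def] at this
        · intro h; have := congrArg Fin.val h; omega
      have hne2 : Equiv.swap u1 w u1 = w := Equiv.swap_apply_left _ _
      have key : Equiv.swap u w
          = Equiv.swap u1 w * Equiv.swap u u1 * (Equiv.swap u1 w)⁻¹ := by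
        rw [← Equiv.swap_apply_apply, hne1, hne2]
      rw [key, Equiv.swap_inv]
      have hcomp : y ∘ (Equiv.swap u1 w * Equiv.swap u u1 * Equiv.swap u1 w)
          = ((y ∘ Equiv.swap u1 w) ∘ Equiv.swap u u1) ∘ Equiv.swap u1 w := rfl
      rw [hcomp]
      rw [ih u1 w (by simp [hu1def]; omega) _]
      rw [schur_swap_adj hlam u u1 (by simp [hu1def]) _]
      rw [ih u1 w (by simp [hu1def]; omega) y]
  have swap_any : ∀ u w : Fin m, u ≠ w →
      ∀ y : Fin m → ℂ, schur m lam (y ∘ Equiv.swap u w) = schur m lam y := by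
    intro u w hne y
    rcases Nat.lt_or_ge (u : ℕ) (w : ℕ) with h | h
    · exact swap_dist ((w : ℕ) - (u : ℕ) - 1) u w (by omega) y
    · have hlt : (w : ℕ) < (u : ℕ) := by
        rcases Nat.lt_or_ge (w : ℕ) (u : ℕ) with h' | h'
        · exact h'
        · exact absurd (Fin.ext (by omega)) hne
      rw [Equiv.swap_comm]
      exact swap_dist ((u : ℕ) - (w : ℕ) - 1) w u (by omega) y
  have main : ∀ σ : Equiv.Perm (Fin m), ∀ y : Fin m → ℂ,
      schur m lam (y ∘ σ) = schur m lam y := by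
    intro σ
    refine Equiv.Perm.swap_induction_on σ ?_ ?_
    · intro y; rfl
    · intro f i j hij ih y
      have hcomp : y ∘ (Equiv.swap i j * f) = (y ∘ Equiv.swap i j) ∘ f := rfl
      rw [hcomp, ih (y ∘ Equiv.swap i j), swap_any i j hij y]
  exact main σ x

end Swap


end BK


section SchurSet

open Finset

lemma schurSet_eq_schur {lam : ℕ → ℕ} (hlam : ∀ r, lam (r + 1) ≤ lam r) {I : Finset ℂ}
    {M : ℕ} (hM : I.card = M) (y : Fin M → ℂ) (hinj : Function.Injective y)
    (hmem : ∀ i, y i ∈ I) : schurSet lam I = schur M lam y := by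
  subst hM
  classical
  have hinj' : Function.Injective (fun i : Fin I.card => (⟨y i, hmem i⟩ : {z // z ∈ I})) :=
    fun i j h => hinj (congrArg Subtype.val h)
  have hbij : Function.Bijective (fun i : Fin I.card => (⟨y i, hmem i⟩ : {z // z ∈ I})) := by
    rw [Fintype.bijective_iff_injective_and_card]
    exact ⟨hinj', by simp [Fintype.card_coe]⟩
  let e : Fin I.card ≃ {z // z ∈ I} := Equiv.ofBijective _ hbij
  let σ : Equiv.Perm (Fin I.card) := e.trans I.equivFin
  have hcomp : ((fun i => ((I.equivFin.symm i : {z // z ∈ I}) : ℂ)) ∘ σ) = y := by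
    funext i
    show ((I.equivFin.symm (I.equivFin (e i)) : {z // z ∈ I}) : ℂ) = y i
    rw [Equiv.symm_apply_apply]
    rfl
  unfold schurSet
  rw [← hcomp]
  exact (BK.schur_comp_perm hlam σ _).symm

lemma schur_smul (m : ℕ) (lam : ℕ → ℕ) (c : ℂ) (x : Fin m → ℂ) :
    schur m lam (fun i => c * x i) = c ^ (youngCells m lam).card * schur m lam x := by
  unfold schur
  rw [Finset.mul_sum]
  apply Finset.sum_congr rfl
  intro T _
  rw [show (∏ p, c * x (T p)) = (∏ _p : {p // p ∈ youngCells m lam}, c) * ∏ p, x (T p) from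
    Finset.prod_mul_distrib]
  rw [Finset.prod_const, Finset.card_univ, Fintype.card_coe]

lemma schur_conj (m : ℕ) (lam : ℕ → ℕ) (x : Fin m → ℂ) :
    schur m lam (fun i => (starRingEnd ℂ) (x i)) = (starRingEnd ℂ) (schur m lam x) := by
  unfold schur
  rw [map_sum]
  exact Finset.sum_congr rfl fun T _ => (map_prod _ _ _).symm

lemma rect_antitone (a b : ℕ) : ∀ r, rectPart a b (r + 1) ≤ rectPart a b r := by
  intro r
  unfold rectPart
  split <;> split <;> omega

lemma card_youngCells_rect (m a b : ℕ) (hab : a ≤ m) :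
    (youngCells m (rectPart a b)).card = a * b := by
  unfold youngCells
  rw [Finset.card_biUnion]
  · have hterm : ∀ r ∈ range m,
        ((range (rectPart a b r)).image fun c => (r, c)).card = rectPart a b r := by
      intro r _
      rw [Finset.card_image_of_injective _ (fun c1 c2 h => (Prod.mk.injEq _ _ _ _ ▸ h).2),
        Finset.card_range]
    rw [Finset.sum_congr rfl hterm]
    unfold rectPart
    rw [Finset.sum_ite, Finset.sum_const_zero, add_zero, Finset.sum_const]
    have hfil : (range m).filter (fun r => r < a) = range a := by
      ext r
      simp only [Finset.mem_filter, Finset.mem_range]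
      omega
    rw [hfil, Finset.card_range, smul_eq_mul]
  · intro r _ r' _ hne
    rw [Function.onFun_apply, Finset.disjoint_left]
    rintro q hq hq'
    rw [Finset.mem_image] at hq hq'
    obtain ⟨c, _, rfl⟩ := hq
    obtain ⟨c', _, heq⟩ := hq'
    exact hne (congrArg Prod.fst heq).symm

lemma schur_cells_empty (m : ℕ) (lam : ℕ → ℕ) (h : youngCells m lam = ∅) (x : Fin m → ℂ) :
    schur m lam x = 1 := by
  classical
  haveI : IsEmpty {p // p ∈ youngCells m lam} :=
    ⟨fun p => Finset.notMem_empty p.1 (h ▸ p.2)⟩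
  unfold schur
  have hU : ∀ T : {p // p ∈ youngCells m lam} → Fin m, (∏ p, x (T p)) = 1 := fun T => by
    rw [Finset.univ_eq_empty, Finset.prod_empty]
  rw [Finset.sum_congr rfl (fun T _ => hU T), Finset.sum_const]
  haveI : Unique ({p // p ∈ youngCells m lam} → Fin m) := Pi.uniqueOfIsEmpty _
  have hcard : (ssytFinset m lam).card = 1 := by
    apply Finset.card_eq_one.2
    refine ⟨default, ?_⟩
    ext T
    simp only [Finset.mem_singleton]
    constructor
    · intro _; exact Unique.eq_default T
    · intro hT
      apply BK.mem_ssytFinset.2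
      exact ⟨fun p => isEmptyElim p, fun p => isEmptyElim p⟩
  rw [hcard]
  simp

lemma youngCells_rect_empty (m a b : ℕ) (h : a = 0 ∨ b = 0) :
    youngCells m (rectPart a b) = ∅ := by
  ext q
  obtain ⟨r, c⟩ := q
  simp only [BK.mem_youngCells, Finset.notMem_empty, iff_false]
  rintro ⟨h1, h2⟩
  unfold rectPart at h2
  rcases h with rfl | rfl
  · simp at h2
  · revert h2; split <;> omega

lemma schurSet_rect_empty (a b : ℕ) (I : Finset ℂ) (h : a = 0 ∨ b = 0) :
    schurSet (rectPart a b) I = 1 :=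
  schur_cells_empty _ _ (youngCells_rect_empty _ _ _ h) _

lemma schurSet_image_mul {lam : ℕ → ℕ} (hlam : ∀ r, lam (r + 1) ≤ lam r) (I : Finset ℂ)
    {c : ℂ} (hc : c ≠ 0) :
    schurSet lam (I.image fun z => c * z)
      = c ^ (youngCells I.card lam).card * schurSet lam I := by
  classical
  have hinjm : Function.Injective (fun z : ℂ => c * z) := mul_right_injective₀ hc
  have hcard : (I.image fun z => c * z).card = I.card := Finset.card_image_of_injective _ hinjm
  have h1 : schurSet lam (I.image fun z => c * z)
      = schur I.card lam (fun i => c * ((I.equivFin.symm i : {z // z ∈ I}) : ℂ)) := by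
    apply schurSet_eq_schur hlam hcard
    · intro i j h
      exact I.equivFin.symm.injective (Subtype.ext (hinjm h))
    · intro i
      exact Finset.mem_image_of_mem _ (I.equivFin.symm i).2
  rw [h1, schur_smul]
  rfl

lemma schurSet_image_conj {lam : ℕ → ℕ} (hlam : ∀ r, lam (r + 1) ≤ lam r) (I : Finset ℂ) :
    schurSet lam (I.image fun z => (starRingEnd ℂ) z)
      = (starRingEnd ℂ) (schurSet lam I) := by
  classical
  have hinjc : Function.Injective (fun z : ℂ => (starRingEnd ℂ) z) :=
    (starRingEnd ℂ).injective
  have hcard : (I.image fun z => (starRingEnd ℂ) z).card = I.card :=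
    Finset.card_image_of_injective _ hinjc
  have h1 : schurSet lam (I.image fun z => (starRingEnd ℂ) z)
      = schur I.card lam (fun i => (starRingEnd ℂ) ((I.equivFin.symm i : {z // z ∈ I}) : ℂ)) := by
    apply schurSet_eq_schur hlam hcard
    · intro i j h
      exact I.equivFin.symm.injective (Subtype.ext (hinjc h))
    · intro i
      exact Finset.mem_image_of_mem _ (I.equivFin.symm i).2
  rw [h1, schur_conj]
  rfl

lemma zetaRoot_ne_zero (n : ℕ) : zetaRoot n ≠ 0 := Complex.exp_ne_zero _

lemma zetaRoot_pow_n {n : ℕ} (hn : n ≠ 0) : zetaRoot n ^ n = 1 := by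
  unfold zetaRoot
  rw [← Complex.exp_nat_mul]
  have h : (n : ℂ) * (2 * Real.pi * Complex.I / n) = 2 * Real.pi * Complex.I := by
    have : (n : ℂ) ≠ 0 := Nat.cast_ne_zero.2 hn
    field_simp
  rw [h, Complex.exp_two_pi_mul_I]

end SchurSet

/-- Dihedral equivariance of the critical points: for a root set `I` of type `(k,n)`
with all rectangular Schur evaluations nonzero, `ζ·I` and `conj(I)` are again root sets
of type `(k,n)` satisfying the same nonvanishing condition, and
`x*(ζ·I) = ρ(x*(I))`, `x*(conj I) = conj(x*(I))` where `(ρ(x))_{i,j} = ζ^{k−i+j}·x_{i,j}`.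
In particular the whole dihedral orbit of `I` defines objects of the Fukaya category. -/
theorem xstar_dihedral_equivariant (n k : ℕ) (hn : 2 ≤ n) (hk1 : 1 ≤ k)
    (hk2 : k ≤ n - 1) (I : Finset ℂ) (hI : IsRootSet k n I)
    (hS : ∀ a b : ℕ, 1 ≤ a → a ≤ k → 1 ≤ b → b ≤ n - k →
      schurSet (rectPart a b) I ≠ 0) :
    IsRootSet k n (I.image fun z => zetaRoot n * z) ∧
    IsRootSet k n (I.image fun z => (starRingEnd ℂ) z) ∧
    (∀ a b : ℕ, 1 ≤ a → a ≤ k → 1 ≤ b → b ≤ n - k →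
      schurSet (rectPart a b) (I.image fun z => zetaRoot n * z) ≠ 0) ∧
    (∀ a b : ℕ, 1 ≤ a → a ≤ k → 1 ≤ b → b ≤ n - k →
      schurSet (rectPart a b) (I.image fun z => (starRingEnd ℂ) z) ≠ 0) ∧
    (∀ i j : ℕ, 1 ≤ i → i ≤ k → 1 ≤ j → j ≤ n - k →
      xstar k (I.image fun z => zetaRoot n * z) (i, j) =
        zetaRoot n ^ (k - i + j) * xstar k I (i, j)) ∧
    (∀ i j : ℕ, 1 ≤ i → i ≤ k → 1 ≤ j → j ≤ n - k →
      xstar k (I.image fun z => (starRingEnd ℂ) z) (i, j) =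
        (starRingEnd ℂ) (xstar k I (i, j))) := by
  obtain ⟨hcard, hval⟩ := hI
  have hn0 : n ≠ 0 := by omega
  set c := zetaRoot n with hcdef
  have hc : c ≠ 0 := zetaRoot_ne_zero n
  have hcn : c ^ n = 1 := zetaRoot_pow_n hn0
  have hconj_inj : Function.Injective (fun z : ℂ => (starRingEnd ℂ) z) :=
    (starRingEnd ℂ).injective
  have hroot1 : IsRootSet k n (I.image fun z => c * z) := by
    constructor
    · rw [Finset.card_image_of_injective _ (mul_right_injective₀ hc)]; exact hcard
    · intro w hw
      obtain ⟨z, hz, rfl⟩ := Finset.mem_image.1 hw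
      rw [mul_pow, hcn, one_mul]
      exact hval z hz
  have hroot2 : IsRootSet k n (I.image fun z => (starRingEnd ℂ) z) := by
    constructor
    · rw [Finset.card_image_of_injective _ hconj_inj]; exact hcard
    · intro w hw
      obtain ⟨z, hz, rfl⟩ := Finset.mem_image.1 hw
      rw [← map_pow, hval z hz]
      simp
  have hmulS : ∀ a b : ℕ, a ≤ k → schurSet (rectPart a b) (I.image fun z => c * z)
      = c ^ (a * b) * schurSet (rectPart a b) I := by
    intro a b hak
    rw [schurSet_image_mul (rect_antitone a b) I hc,
      card_youngCells_rect I.card a b (by omega)]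
  have hconjS : ∀ a b : ℕ, schurSet (rectPart a b) (I.image fun z => (starRingEnd ℂ) z)
      = (starRingEnd ℂ) (schurSet (rectPart a b) I) := fun a b =>
    schurSet_image_conj (rect_antitone a b) I
  refine ⟨hroot1, hroot2, ?_, ?_, ?_, ?_⟩
  · intro a b ha1 hak hb1 hbnk
    rw [hmulS a b hak]
    exact mul_ne_zero (pow_ne_zero _ hc) (hS a b ha1 hak hb1 hbnk)
  · intro a b ha1 hak hb1 hbnk
    rw [hconjS a b]
    intro h0
    exact hS a b ha1 hak hb1 hbnk ((starRingEnd ℂ).injective (by rw [h0, map_zero]))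
  · intro i j hi1 hik hj1 hjnk
    have hden : schurSet (rectPart (k - i) (j - 1)) I ≠ 0 := by
      by_cases hdeg : k - i = 0 ∨ j - 1 = 0
      · rw [schurSet_rect_empty _ _ I hdeg]; exact one_ne_zero
      · push_neg at hdeg
        exact hS (k - i) (j - 1) (by omega) (by omega) (by omega) (by omega)
    show schurSet (rectPart (k + 1 - i) j) (I.image fun z => c * z)
        / schurSet (rectPart (k - i) (j - 1)) (I.image fun z => c * z)
      = c ^ (k - i + j) *
        (schurSet (rectPart (k + 1 - i) j) I / schurSet (rectPart (k - i) (j - 1)) I)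
    rw [hmulS (k + 1 - i) j (by omega), hmulS (k - i) (j - 1) (by omega)]
    have hexp : (k + 1 - i) * j = (k - i) * (j - 1) + (k - i + j) := by
      set u := k - i with hu
      set v := j - 1 with hv
      have h1 : k + 1 - i = u + 1 := by omega
      have h2 : j = v + 1 := by omega
      rw [h1, h2]
      ring
    rw [hexp, pow_add, mul_assoc, mul_div_mul_left _ _ (pow_ne_zero _ hc), mul_div_assoc]
  · intro i j hi1 hik hj1 hjnk
    show schurSet (rectPart (k + 1 - i) j) (I.image fun z => (starRingEnd ℂ) z)
        / schurSet (rectPart (k - i) (j - 1)) (I.image fun z => (starRingEnd ℂ) z)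
      = (starRingEnd ℂ)
        (schurSet (rectPart (k + 1 - i) j) I / schurSet (rectPart (k - i) (j - 1)) I)
    rw [hconjS, hconjS, map_div₀]

end
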